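/- Let u be a node whose neighborhood graph N_u consists of a clique of size c together with b isolated vertices (so d_u = b + c). Then for 3 ≤ ℓ ≤ c, the ℓth-order local clustering coefficient equals C_ℓ(u) = (c - ℓ + 1)/(c + b - ℓ + 1), and C_2(u) = (c-1)c/((b+c-1)(b+c)). Consequently, as d_u → ∞ with c/(c+b) → α, C_2(u) → α² and C_ℓ(u) → α, so the upper bound C_ℓ(u) = √(C_2(u)) is attained in the limit. -/

import Mathlib

open Filter

/-- The number of `j`-cliques in a graph `H` (thought of as the neighborhood graph `N_u`). -/
noncomputable def cliqueCount {V : Type*} [Fintype V] (H : SimpleGraph V) (j : ℕ) : ℕ :=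
  {s : Finset V | H.IsNClique j s}.ncard

/-- The local `ℓ`th-order clustering coefficient of a node whose neighborhood graph is `H`
(on `d_u = |V|` vertices): `C_ℓ(u) = ℓ·|K_ℓ(N_u)| / ((d_u - ℓ + 1)·|K_{ℓ-1}(N_u)|)`. -/
noncomputable def nbrLocalCC {V : Type*} [Fintype V] (H : SimpleGraph V) (ℓ : ℕ) : ℝ :=
  ((ℓ : ℝ) * cliqueCount H ℓ) /
    ((((Fintype.card V : ℝ)) - ℓ + 1) * cliqueCount H (ℓ - 1))

/-!
Every clique with at least two vertices contains an edge, so it avoids the isolated vertices and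
is a subset of `C`; hence `|K_j(N_u)| = (c choose j)` for `j ≥ 2`, while `|K_1(N_u)| = d_u`.
The identity `ℓ·(c choose ℓ) = (c - ℓ + 1)·(c choose (ℓ - 1))` then gives the closed forms, and
both limits reduce to `(x - k) / (t - k) → α` whenever `x / t → α` and `t → ∞`.
-/

theorem Nat.cast_succ_mul_choose_succ {R : Type*} [CommRing R] {n k : ℕ} (hk : k ≤ n) :
    ((k : R) + 1) * n.choose (k + 1) = ((n : R) - k) * n.choose k := by
  have h := congrArg (Nat.cast : ℕ → R) (Nat.choose_succ_right_eq n k)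
  push_cast [Nat.cast_sub hk] at h
  linear_combination h

theorem Filter.Tendsto.sub_const_div_sub_const {ι : Type*} {l : Filter ι} {x t : ι → ℝ} {α : ℝ}
    (hx : Tendsto (fun n => x n / t n) l (nhds α)) (ht : Tendsto t l atTop) (k : ℝ) :
    Tendsto (fun n => (x n - k) / (t n - k)) l (nhds α) := by
  have hk : Tendsto (fun n => k / t n) l (nhds 0) := tendsto_const_nhds.div_atTop ht
  have h := (hx.sub hk).div ((tendsto_const_nhds (x := (1 : ℝ))).sub hk) (by norm_num)
  rw [sub_zero, sub_zero, div_one] at h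
  refine h.congr' ?_
  filter_upwards [ht.eventually_gt_atTop 0] with n hn
  rw [Pi.div_apply, ← sub_div, one_sub_div hn.ne', div_div_div_cancel_right₀ hn.ne']

section CliqueCount

variable {V : Type*} [Fintype V] (H : SimpleGraph V)

theorem cliqueCount_one : cliqueCount H 1 = Fintype.card V := by
  have hset : {s : Finset V | H.IsNClique 1 s} =
      ((Finset.univ.powersetCard 1 : Finset (Finset V)) : Set (Finset V)) := by
    ext s
    simp [SimpleGraph.isNClique_one, Finset.card_eq_one]
  rw [cliqueCount, hset, Set.ncard_coe_finset, Finset.card_powersetCard, Nat.choose_one_right,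
    Finset.card_univ]

variable {H} {C : Finset V}

theorem cliqueCount_eq_choose_of_isolated (hC : H.IsClique ↑C)
    (hisolated : ∀ v : V, v ∉ C → ∀ w : V, ¬ H.Adj v w) {j : ℕ} (hj : 2 ≤ j) :
    cliqueCount H j = C.card.choose j := by
  have hset : {s : Finset V | H.IsNClique j s} =
      ((C.powersetCard j : Finset (Finset V)) : Set (Finset V)) := by
    ext s
    simp only [Set.mem_ofPred_eq, Finset.mem_coe, Finset.mem_powersetCard,
      SimpleGraph.isNClique_iff]
    constructor
    · rintro ⟨hs, hcard⟩
      refine ⟨fun v hv => ?_, hcard⟩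
      by_contra hvC
      obtain ⟨w, hw, hwv⟩ := Finset.exists_mem_ne (by omega : 1 < s.card) v
      exact hisolated v hvC w (hs hv hw hwv.symm)
    · rintro ⟨hsC, hcard⟩
      exact ⟨hC.subset (by exact_mod_cast hsC), hcard⟩
  rw [cliqueCount, hset, Set.ncard_coe_finset, Finset.card_powersetCard]

theorem nbrLocalCC_two_of_isolated (hC : H.IsClique ↑C)
    (hisolated : ∀ v : V, v ∉ C → ∀ w : V, ¬ H.Adj v w) :
    nbrLocalCC H 2 = ((C.card : ℝ) - 1) * C.card /
      (((Fintype.card V : ℝ) - 1) * Fintype.card V) := by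
  rw [nbrLocalCC, cliqueCount_eq_choose_of_isolated hC hisolated le_rfl, show 2 - 1 = 1 from rfl,
    cliqueCount_one, Nat.cast_choose_two]
  ring


theorem nbrLocalCC_of_isolated (hC : H.IsClique ↑C) (hisolated : ∀ v : V, v ∉ C → ∀ w : V, ¬ H.Adj v w)
    {ℓ : ℕ} (hℓ : 3 ≤ ℓ) (hℓC : ℓ ≤ C.card) :
    nbrLocalCC H ℓ = ((C.card : ℝ) - ℓ + 1) / ((Fintype.card V : ℝ) - ℓ + 1) := by
  obtain ⟨k, rfl⟩ : ∃ k, ℓ = k + 1 := ⟨ℓ - 1, by omega⟩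
  have hchoose : (C.card.choose k : ℝ) ≠ 0 := by
    exact_mod_cast (Nat.choose_pos (by omega)).ne'
  rw [nbrLocalCC, Nat.add_sub_cancel, cliqueCount_eq_choose_of_isolated hC hisolated (by omega : 2 ≤ k + 1),
    cliqueCount_eq_choose_of_isolated hC hisolated (by omega), Nat.cast_add_one,
    Nat.cast_succ_mul_choose_succ (by omega), mul_div_mul_right _ _ hchoose]
  ring

end CliqueCount

theorem stmt_12_general {V : Type*} [Fintype V] (H : SimpleGraph V)
    (b c : ℕ) (C : Finset V) (hCcard : C.card = c) (hclique : H.IsClique ↑C)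
    (hisolated : ∀ v : V, v ∉ C → ∀ w : V, ¬ H.Adj v w)
    (hV : Fintype.card V = b + c)
    (ℓ : ℕ) (hℓ3 : 3 ≤ ℓ) (hℓc : ℓ ≤ c) :
    nbrLocalCC H ℓ = ((c : ℝ) - ℓ + 1) / ((c : ℝ) + b - ℓ + 1) ∧
    nbrLocalCC H 2 = ((c : ℝ) - 1) * c / (((b : ℝ) + c - 1) * ((b : ℝ) + c)) ∧
    (∀ (bs cs : ℕ → ℕ) (α : ℝ),
      Tendsto (fun n => (cs n : ℝ) / ((cs n : ℝ) + (bs n : ℝ))) atTop (nhds α) →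
      Tendsto (fun n => (cs n : ℝ) + (bs n : ℝ)) atTop atTop →
      Tendsto (fun n => ((cs n : ℝ) - 1) * (cs n : ℝ) /
          ((((bs n : ℝ) + (cs n : ℝ)) - 1) * ((bs n : ℝ) + (cs n : ℝ)))) atTop (nhds (α ^ 2)) ∧
      Tendsto (fun n => ((cs n : ℝ) - ℓ + 1) / ((cs n : ℝ) + (bs n : ℝ) - ℓ + 1))
        atTop (nhds α)) := by
  subst hCcard
  refine ⟨?_, ?_, fun bs cs α hα hd => ⟨?_, ?_⟩⟩
  · rw [nbrLocalCC_of_isolated hclique hisolated hℓ3 hℓc, hV]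
    push_cast
    ring_nf
  · rw [nbrLocalCC_two_of_isolated hclique hisolated, hV]
    push_cast
    ring_nf
  · rw [sq]
    refine ((hα.sub_const_div_sub_const hd 1).mul hα).congr fun n => ?_
    rw [div_mul_div_comm, add_comm (cs n : ℝ)]
  · refine (hα.sub_const_div_sub_const hd ((ℓ : ℝ) - 1)).congr fun n => ?_
    ring_nf

theorem stmt_12 {V : Type*} [Fintype V] [DecidableEq V] (H : SimpleGraph V)
    (b c : ℕ) (C : Finset V) (hCcard : C.card = c) (hclique : H.IsClique ↑C)
    (hisolated : ∀ v : V, v ∉ C → ∀ w : V, ¬ H.Adj v w)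
    (hV : Fintype.card V = b + c)
    (ℓ : ℕ) (hℓ3 : 3 ≤ ℓ) (hℓc : ℓ ≤ c) :
    nbrLocalCC H ℓ = ((c : ℝ) - ℓ + 1) / ((c : ℝ) + b - ℓ + 1) ∧
    nbrLocalCC H 2 = ((c : ℝ) - 1) * c / (((b : ℝ) + c - 1) * ((b : ℝ) + c)) ∧
    (∀ (bs cs : ℕ → ℕ) (α : ℝ),
      Tendsto (fun n => (cs n : ℝ) / ((cs n : ℝ) + (bs n : ℝ))) atTop (nhds α) →
      Tendsto (fun n => (cs n : ℝ) + (bs n : ℝ)) atTop atTop →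
      Tendsto (fun n => ((cs n : ℝ) - 1) * (cs n : ℝ) /
          ((((bs n : ℝ) + (cs n : ℝ)) - 1) * ((bs n : ℝ) + (cs n : ℝ)))) atTop (nhds (α ^ 2)) ∧
      Tendsto (fun n => ((cs n : ℝ) - ℓ + 1) / ((cs n : ℝ) + (bs n : ℝ) - ℓ + 1))
        atTop (nhds α)) :=
  stmt_12_general H b c C hCcard hclique hisolated hV ℓ hℓ3 hℓc
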